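/- The formulas □_i(p ∨ q) ∧ □_i(¬p ∨ q) ∧ ◇_i ¬q and □_i q ∧ ◇_i ⊥ are logically equivalent in K_n, and the latter is a logically separable epistemic term. -/

import Mathlib

universe u v

inductive Fm (A P : Type) : Type
  | tru : Fm A P
  | var : P → Fm A P
  | neg : Fm A P → Fm A P
  | and : Fm A P → Fm A P → Fm A P
  | box : A → Fm A P → Fm A P

namespace Fm
variable {A P : Type}
def or (φ ψ : Fm A P) : Fm A P := neg ((neg φ).and (neg ψ))
def bot : Fm A P := neg tru
def dia (i : A) (φ : Fm A P) : Fm A P := neg (box i (neg φ))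
end Fm

structure KM (A P : Type) where
  S : Type
  R : A → S → S → Prop
  V : S → P → Prop

variable {A P : Type}

def Sat (M : KM A P) : M.S → Fm A P → Prop
  | _, .tru => True
  | s, .var p => M.V s p
  | s, .neg φ => ¬ Sat M s φ
  | s, .and φ ψ => Sat M s φ ∧ Sat M s ψ
  | s, .box i φ => ∀ t, M.R i s t → Sat M t φ

def Satisfiable (φ : Fm A P) : Prop := ∃ (M : KM A P) (s : M.S), Sat M s φ

def Entails (φ ψ : Fm A P) : Prop := ∀ (M : KM A P) (s : M.S), Sat M s φ → Sat M s ψ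

def FEquiv (φ ψ : Fm A P) : Prop := Entails φ ψ ∧ Entails ψ φ

def IsProp : Fm A P → Prop
  | .tru => True
  | .var _ => True
  | .neg φ => IsProp φ
  | .and φ ψ => IsProp φ ∧ IsProp ψ
  | .box _ _ => False

def Basic (φ : Fm A P) : Prop :=
  IsProp φ ∨ (∃ i ψ, φ = Fm.box i ψ) ∨ (∃ i ψ, φ = Fm.dia i ψ)

def conj : List (Fm A P) → Fm A P
  | [] => Fm.tru
  | φ :: L => φ.and (conj L)

def disj : List (Fm A P) → Fm A P
  | [] => Fm.bot
  | φ :: L => φ.or (disj L)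

def EpTerm (L : List (Fm A P)) : Prop := ∀ c ∈ L, Basic c

def LogSep (L : List (Fm A P)) : Prop :=
  ∀ η : Fm A P, Basic η → Entails (conj L) η → ∃ α ∈ L, Entails α η

def fvars : Fm A P → Set P
  | .tru => ∅
  | .var p => {p}
  | .neg φ => fvars φ
  | .and φ ψ => fvars φ ∪ fvars ψ
  | .box _ φ => fvars φ

def fsize : Fm A P → ℕ
  | .tru => 1
  | .var _ => 1
  | .neg φ => fsize φ + 1
  | .and φ ψ => fsize φ + fsize ψ + 1
  | .box _ φ => fsize φ + 1

/-! Both formulas are inconsistent: under `□_i`, the clauses `p ∨ q` and `¬p ∨ q` resolve to `q`,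
which contradicts `◇_i ¬q`; and `◇_i ⊥` has no witness. Inconsistent formulas are equivalent, and a
term with an inconsistent conjunct is separable since that conjunct alone entails everything. -/

section Semantics

variable {M : KM A P} {s : M.S}

theorem sat_or {φ ψ : Fm A P} : Sat M s (φ.or ψ) ↔ Sat M s φ ∨ Sat M s ψ := by
  simp only [Fm.or, Sat]
  tauto

theorem not_sat_bot : ¬ Sat M s (Fm.bot : Fm A P) := by
  simp [Fm.bot, Sat]

theorem sat_dia {i : A} {φ : Fm A P} : Sat M s (Fm.dia i φ) ↔ ∃ t, M.R i s t ∧ Sat M t φ := by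
  simp [Fm.dia, Sat]

theorem sat_conj {L : List (Fm A P)} : Sat M s (conj L) ↔ ∀ φ ∈ L, Sat M s φ := by
  induction L with
  | nil => simp [conj, Sat]
  | cons φ L ih => simp [conj, Sat, ih]

theorem sat_box_of_resolution {i : A} {φ ψ : Fm A P} (h₁ : Sat M s (Fm.box i (φ.or ψ)))
    (h₂ : Sat M s (Fm.box i ((Fm.neg φ).or ψ))) : Sat M s (Fm.box i ψ) := fun t hst => by
  have hpos := sat_or.1 (h₁ t hst)
  have hneg := sat_or.1 (h₂ t hst)
  simp only [Sat] at hneg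
  tauto

end Semantics

theorem Entails.of_not_satisfiable {φ : Fm A P} (hφ : ¬ Satisfiable φ) (ψ : Fm A P) :
    Entails φ ψ := fun M s h => absurd ⟨M, s, h⟩ hφ

theorem FEquiv.of_not_satisfiable {φ ψ : Fm A P} (hφ : ¬ Satisfiable φ) (hψ : ¬ Satisfiable ψ) :
    FEquiv φ ψ :=
  ⟨.of_not_satisfiable hφ ψ, .of_not_satisfiable hψ φ⟩

theorem not_satisfiable_conj_of_mem {L : List (Fm A P)} {α : Fm A P} (hα : α ∈ L)
    (hα' : ¬ Satisfiable α) : ¬ Satisfiable (conj L) :=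
  fun ⟨M, s, h⟩ => hα' ⟨M, s, sat_conj.1 h α hα⟩

theorem logSep_of_not_satisfiable_mem {L : List (Fm A P)} {α : Fm A P} (hα : α ∈ L)
    (hα' : ¬ Satisfiable α) : LogSep L :=
  fun η _ _ => ⟨α, hα, .of_not_satisfiable hα' η⟩

theorem not_satisfiable_dia_bot (i : A) : ¬ Satisfiable (Fm.dia i (Fm.bot : Fm A P)) := by
  rintro ⟨M, s, h⟩
  obtain ⟨t, -, ht⟩ := sat_dia.1 h
  exact not_sat_bot ht

theorem not_satisfiable_conj_resolution_dia_neg (i : A) (φ ψ : Fm A P) :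
    ¬ Satisfiable (conj [Fm.box i (φ.or ψ), Fm.box i ((Fm.neg φ).or ψ), Fm.dia i (Fm.neg ψ)]) := by
  rintro ⟨M, s, h⟩
  simp only [sat_conj, List.mem_cons, List.not_mem_nil, or_false, forall_eq_or_imp,
    forall_eq] at h
  obtain ⟨h₁, h₂, h₃⟩ := h
  obtain ⟨t, hst, hψ⟩ := sat_dia.1 h₃
  exact hψ (sat_box_of_resolution h₁ h₂ t hst)

theorem basic_box (i : A) (φ : Fm A P) : Basic (Fm.box i φ) := .inr (.inl ⟨i, φ, rfl⟩)

theorem basic_dia (i : A) (φ : Fm A P) : Basic (Fm.dia i φ) := .inr (.inr ⟨i, φ, rfl⟩)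

theorem example_equivalent_separable_term_general (p q : P) (i : A) :
    let L : List (Fm A P) :=
      [Fm.box i ((Fm.var p).or (Fm.var q)),
       Fm.box i ((Fm.neg (Fm.var p)).or (Fm.var q)),
       Fm.dia i (Fm.neg (Fm.var q))]
    let L' : List (Fm A P) := [Fm.box i (Fm.var q), Fm.dia i Fm.bot]
    FEquiv (conj L) (conj L') ∧ EpTerm L' ∧ LogSep L' := by
  intro L L'
  have hmem : Fm.dia i Fm.bot ∈ L' := by simp [L']
  refine ⟨.of_not_satisfiable (not_satisfiable_conj_resolution_dia_neg i _ _)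
      (not_satisfiable_conj_of_mem hmem (not_satisfiable_dia_bot i)), ?_,
    logSep_of_not_satisfiable_mem hmem (not_satisfiable_dia_bot i)⟩
  simp only [EpTerm, L', List.mem_cons, List.not_mem_nil, or_false, forall_eq_or_imp, forall_eq]
  exact ⟨basic_box i _, basic_dia i _⟩

theorem example_equivalent_separable_term (p q : P) (hpq : p ≠ q) (i : A) :
    let L : List (Fm A P) :=
      [Fm.box i ((Fm.var p).or (Fm.var q)),
       Fm.box i ((Fm.neg (Fm.var p)).or (Fm.var q)),
       Fm.dia i (Fm.neg (Fm.var q))]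
    let L' : List (Fm A P) := [Fm.box i (Fm.var q), Fm.dia i Fm.bot]
    FEquiv (conj L) (conj L') ∧ EpTerm L' ∧ LogSep L' :=
  example_equivalent_separable_term_general p q i
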